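/- For every natural number n ≥ 1, T(K_na(4n+1)) = T(K_na(4n+3)). -/
import Mathlib


open Finset

/-- A domino: a set of two cells sharing an edge. -/
def IsDomino (d : Finset (ℤ × ℤ)) : Prop :=
  ∃ c c' : ℤ × ℤ, |c.1 - c'.1| + |c.2 - c'.2| = 1 ∧ d = {c, c'}

/-- `P` is a tiling of the region `R`: a partition of `R` into dominoes. -/
def IsTiling (R : Set (ℤ × ℤ)) (P : Set (Finset (ℤ × ℤ))) : Prop :=
  (∀ d ∈ P, IsDomino d) ∧ P.PairwiseDisjoint id ∧ (⋃ d ∈ P, (d : Set (ℤ × ℤ))) = R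

/-- `T R`: the number of domino tilings of the region `R`. -/
noncomputable def numTilings (R : Set (ℤ × ℤ)) : ℕ :=
  Set.ncard {P : Set (Finset (ℤ × ℤ)) | IsTiling R P}

/-- The Aztec diamond of order `n`. -/
def AD (n : ℕ) : Set (ℤ × ℤ) :=
  {c | |2 * c.1 + 1| + |2 * c.2 + 1| ≤ 2 * (n : ℤ)}

/-- The quartered Aztec diamond `R(n)`. -/
def Rqad (n : ℕ) : Set (ℤ × ℤ) :=
  {c | c ∈ AD n ∧ 2 * ((c.1 + 1).fdiv 2) ≤ c.2 ∧ -2 * (c.1.fdiv 2) - 1 ≤ c.2}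

/-- The abutting quartered Aztec diamond `K_a(n)`. -/
def Ka (n : ℕ) : Set (ℤ × ℤ) :=
  {c | c ∈ AD n ∧ 2 * ((c.1 + 1).fdiv 2) ≤ c.2 ∧ -2 * ((c.1 + 1).fdiv 2) ≤ c.2}

/-- The non-abutting quartered Aztec diamond `K_na(n)`. -/
def Kna (n : ℕ) : Set (ℤ × ℤ) :=
  {c | c ∈ AD n ∧ -2 * ((c.1 + 1).fdiv 2) ≤ c.2 ∧ c.2 ≤ 2 * ((c.1 + 1).fdiv 2) - 1}

-- membership characterization
lemma mem_Kna (m : ℕ) (c : ℤ × ℤ) :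
    c ∈ Kna m ↔ ((2*c.1+1) + (2*c.2+1) ≤ 2*(m:ℤ) ∧ (2*c.1+1) - (2*c.2+1) ≤ 2*(m:ℤ) ∧
      -(2*c.1+1) + (2*c.2+1) ≤ 2*(m:ℤ) ∧ -(2*c.1+1) - (2*c.2+1) ≤ 2*(m:ℤ)) ∧
      -2*((c.1+1)/2) ≤ c.2 ∧ c.2 ≤ 2*((c.1+1)/2)-1 := by
  have h : (c.1+1).fdiv 2 = (c.1+1)/2 := Int.fdiv_eq_ediv_of_nonneg _ (by norm_num)
  simp only [Kna, AD, Set.mem_setOf_eq, h]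
  rcases abs_cases (2*c.1+1) with ⟨h1,h2⟩|⟨h1,h2⟩ <;>
    rcases abs_cases (2*c.2+1) with ⟨h3,h4⟩|⟨h3,h4⟩ <;>
      constructor <;> intro hh <;> omega

-- vertical domino
def vD (a b : ℤ) : Finset (ℤ × ℤ) := {(a, b), (a, b + 1)}

lemma mem_vD {x : ℤ × ℤ} {a b : ℤ} : x ∈ vD a b ↔ x.1 = a ∧ (x.2 = b ∨ x.2 = b + 1) := by
  constructor
  · intro h
    rcases Finset.mem_insert.mp h with h | h
    · rw [h]; exact ⟨rfl, Or.inl rfl⟩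
    · rw [Finset.mem_singleton.mp h]; exact ⟨rfl, Or.inr rfl⟩
  · rintro ⟨h1, h2 | h2⟩
    · have : x = (a, b) := Prod.ext_iff.mpr ⟨h1, h2⟩
      rw [this]; exact Finset.mem_insert_self _ _
    · have : x = (a, b+1) := Prod.ext_iff.mpr ⟨h1, h2⟩
      rw [this]; exact Finset.mem_insert_of_mem (Finset.mem_singleton_self _)

lemma vD_domino (a b : ℤ) : IsDomino (vD a b) :=
  ⟨(a, b), (a, b+1), by simp, rfl⟩

lemma domino_cases {d : Finset (ℤ × ℤ)} (hd : IsDomino d) {x : ℤ × ℤ} (hx : x ∈ d) :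
    ∃ y ∈ d, d = {x, y} ∧
      (y = (x.1 + 1, x.2) ∨ y = (x.1 - 1, x.2) ∨ y = (x.1, x.2 + 1) ∨ y = (x.1, x.2 - 1)) := by
  obtain ⟨c, c', habs, rfl⟩ := hd
  have hnb : ∀ u v : ℤ × ℤ, |u.1 - v.1| + |u.2 - v.2| = 1 →
      (v = (u.1+1, u.2) ∨ v = (u.1-1, u.2) ∨ v = (u.1, u.2+1) ∨ v = (u.1, u.2-1)) := by
    intro u v h
    have h' : (v.1 = u.1+1 ∧ v.2 = u.2) ∨ (v.1 = u.1-1 ∧ v.2 = u.2) ∨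
        (v.1 = u.1 ∧ v.2 = u.2+1) ∨ (v.1 = u.1 ∧ v.2 = u.2-1) := by
      rcases abs_cases (u.1 - v.1) with ⟨h1,h2⟩|⟨h1,h2⟩ <;>
        rcases abs_cases (u.2 - v.2) with ⟨h3,h4⟩|⟨h3,h4⟩ <;> omega
    rcases h' with ⟨h1,h2⟩|⟨h1,h2⟩|⟨h1,h2⟩|⟨h1,h2⟩
    · exact Or.inl (Prod.ext_iff.mpr ⟨h1, h2⟩)
    · exact Or.inr (Or.inl (Prod.ext_iff.mpr ⟨h1, h2⟩))
    · exact Or.inr (Or.inr (Or.inl (Prod.ext_iff.mpr ⟨h1, h2⟩)))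
    · exact Or.inr (Or.inr (Or.inr (Prod.ext_iff.mpr ⟨h1, h2⟩)))
  rcases Finset.mem_insert.mp hx with rfl | hx'
  · exact ⟨c', Finset.mem_insert_of_mem (Finset.mem_singleton_self _), rfl, hnb _ _ habs⟩
  · rw [Finset.mem_singleton.mp hx']
    refine ⟨c, Finset.mem_insert_self _ _, Finset.pair_comm c c', ?_⟩
    have : |c'.1 - c.1| + |c'.2 - c.2| = 1 := by
      rw [abs_sub_comm c'.1 c.1, abs_sub_comm c'.2 c.2]; exact habs
    exact hnb _ _ this

-- generic forcing lemmas
lemma tile_cover {R : Set (ℤ × ℤ)} {P : Set (Finset (ℤ × ℤ))} (hP : IsTiling R P)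
    {x : ℤ × ℤ} (hx : x ∈ R) : ∃ d ∈ P, x ∈ d := by
  have := hP.2.2 ▸ hx
  simpa using this

lemma tile_sub {R : Set (ℤ × ℤ)} {P : Set (Finset (ℤ × ℤ))} (hP : IsTiling R P)
    {d : Finset (ℤ × ℤ)} (hd : d ∈ P) {x : ℤ × ℤ} (hx : x ∈ d) : x ∈ R := by
  rw [← hP.2.2]; exact Set.mem_biUnion hd hx

lemma forced_up {R : Set (ℤ × ℤ)} {P : Set (Finset (ℤ × ℤ))} (hP : IsTiling R P)
    {a b : ℤ} (hx : (a, b) ∈ R) (hr : (a + 1, b) ∉ R) (hd : (a, b - 1) ∉ R)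
    (hl : (a - 1, b) ∉ R ∨ ∃ d' ∈ P, (a - 1, b) ∈ d' ∧ (a, b) ∉ d') :
    vD a b ∈ P := by
  obtain ⟨d, hdP, hxd⟩ := tile_cover hP hx
  obtain ⟨y, hyd, hdeq, hcases⟩ := domino_cases (hP.1 d hdP) hxd
  have hyR : y ∈ R := tile_sub hP hdP hyd
  rcases hcases with rfl | rfl | rfl | rfl
  · exact absurd hyR hr
  · rcases hl with h | ⟨d', hd'P, hyd', hxd'⟩
    · exact absurd hyR h
    · exfalso
      have hne : d ≠ d' := fun h => hxd' (h ▸ hxd)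
      exact (Finset.disjoint_left.mp (hP.2.1 hdP hd'P hne) hyd) hyd'
  · have : d = vD a b := by rw [hdeq]; rfl
    exact this ▸ hdP
  · exact absurd hyR hd

lemma forced_down {R : Set (ℤ × ℤ)} {P : Set (Finset (ℤ × ℤ))} (hP : IsTiling R P)
    {a b : ℤ} (hx : (a, b + 1) ∈ R) (hr : (a + 1, b + 1) ∉ R) (hu : (a, b + 2) ∉ R)
    (hl : (a - 1, b + 1) ∉ R ∨ ∃ d' ∈ P, (a - 1, b + 1) ∈ d' ∧ (a, b + 1) ∉ d') :
    vD a b ∈ P := by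
  obtain ⟨d, hdP, hxd⟩ := tile_cover hP hx
  obtain ⟨y, hyd, hdeq, hcases⟩ := domino_cases (hP.1 d hdP) hxd
  have hyR : y ∈ R := tile_sub hP hdP hyd
  rcases hcases with rfl | rfl | rfl | rfl
  · exact absurd hyR hr
  · rcases hl with h | ⟨d', hd'P, hyd', hxd'⟩
    · exact absurd hyR h
    · exfalso
      have hne : d ≠ d' := fun h => hxd' (h ▸ hxd)
      exact (Finset.disjoint_left.mp (hP.2.1 hdP hd'P hne) hyd) hyd'
  · exfalso; apply hu; simpa [show b + 1 + 1 = b + 2 by ring] using hyR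
  · have : d = vD a b := by
      rw [hdeq]
      have h1 : ((a,b+1).1, (a,b+1).2 - 1) = (a, b) := by norm_num
      rw [h1, vD, Finset.pair_comm]
    exact this ▸ hdP

-- frame cells predicate
def FC (n : ℕ) (c : ℤ × ℤ) : Prop :=
  (2*(n:ℤ)+1 ≤ c.1 ∧ c.1 ≤ 4*(n:ℤ)+2 ∧ (c.2 = c.1-4*(n:ℤ)-3 ∨ c.2 = c.1-4*(n:ℤ)-2)) ∨
  (2*(n:ℤ)+1 ≤ c.1 ∧ c.1 ≤ 4*(n:ℤ)+1 ∧ (c.2 = 4*(n:ℤ)+1-c.1 ∨ c.2 = 4*(n:ℤ)+2-c.1))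

-- the frame: forced dominoes
def Frame (n : ℕ) : Set (Finset (ℤ × ℤ)) :=
  {d | ∃ a : ℤ, (2*(n:ℤ)+1 ≤ a ∧ a ≤ 4*(n:ℤ)+2 ∧ d = vD a (a-4*(n:ℤ)-3)) ∨
       (2*(n:ℤ)+1 ≤ a ∧ a ≤ 4*(n:ℤ)+1 ∧ d = vD a (4*(n:ℤ)+1-a))}

lemma frame_cell_FC {n : ℕ} {d : Finset (ℤ × ℤ)} (hd : d ∈ Frame n)
    {x : ℤ × ℤ} (hx : x ∈ d) : FC n x := by
  obtain ⟨a, ⟨h1, h2, rfl⟩ | ⟨h1, h2, rfl⟩⟩ := hd <;>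
    obtain ⟨hx1, hx2⟩ := mem_vD.mp hx <;> unfold FC
  · left; omega
  · right; omega

lemma FC_cover {n : ℕ} {c : ℤ × ℤ} (hc : FC n c) : ∃ d ∈ Frame n, c ∈ d := by
  rcases hc with ⟨h1, h2, h3⟩ | ⟨h1, h2, h3⟩
  · exact ⟨vD c.1 (c.1-4*(n:ℤ)-3), ⟨c.1, Or.inl ⟨h1, h2, rfl⟩⟩, mem_vD.mpr ⟨rfl, by omega⟩⟩
  · exact ⟨vD c.1 (4*(n:ℤ)+1-c.1), ⟨c.1, Or.inr ⟨h1, h2, rfl⟩⟩, mem_vD.mpr ⟨rfl, by omega⟩⟩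

lemma FC_not_K1 {n : ℕ} {c : ℤ × ℤ} (hc : FC n c) : c ∉ Kna (4*n+1) := by
  rw [mem_Kna]
  unfold FC at hc
  push_cast at hc ⊢
  omega

lemma K3_iff (n : ℕ) (c : ℤ × ℤ) :
    c ∈ Kna (4*n+3) ↔ c ∈ Kna (4*n+1) ∨ FC n c := by
  rw [mem_Kna, mem_Kna]
  unfold FC
  push_cast
  omega

lemma frame_eq_of_mem {n : ℕ} {d d' : Finset (ℤ × ℤ)} (hd : d ∈ Frame n) (hd' : d' ∈ Frame n)
    {x : ℤ × ℤ} (hx : x ∈ d) (hx' : x ∈ d') : d = d' := by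
  obtain ⟨a, ⟨h1, h2, rfl⟩ | ⟨h1, h2, rfl⟩⟩ := hd <;>
    obtain ⟨a', ⟨h1', h2', rfl⟩ | ⟨h1', h2', rfl⟩⟩ := hd' <;>
      obtain ⟨hx1, hx2⟩ := mem_vD.mp hx <;> obtain ⟨hx1', hx2'⟩ := mem_vD.mp hx'
  · have : a = a' := by omega
    rw [this]
  · exfalso; omega
  · exfalso; omega
  · have : a = a' := by omega
    rw [this]

lemma notK3 (n : ℕ) (c : ℤ × ℤ)
    (h : ¬ (((2*c.1+1) + (2*c.2+1) ≤ 2*((4*n+3:ℕ):ℤ) ∧ (2*c.1+1) - (2*c.2+1) ≤ 2*((4*n+3:ℕ):ℤ) ∧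
      -(2*c.1+1) + (2*c.2+1) ≤ 2*((4*n+3:ℕ):ℤ) ∧ -(2*c.1+1) - (2*c.2+1) ≤ 2*((4*n+3:ℕ):ℤ)) ∧
      -2*((c.1+1)/2) ≤ c.2 ∧ c.2 ≤ 2*((c.1+1)/2)-1)) : c ∉ Kna (4*n+3) := by
  rw [mem_Kna]; exact h

lemma frame_sub {n : ℕ} {P : Set (Finset (ℤ × ℤ))} (hP : IsTiling (Kna (4*n+3)) P) :
    Frame n ⊆ P := by
  have memK3 : ∀ c : ℤ × ℤ, FC n c → c ∈ Kna (4*n+3) := fun c hc => (K3_iff n c).mpr (Or.inr hc)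
  -- bottom chain
  have bot : ∀ a : ℤ, 2*(n:ℤ)+1 ≤ a → (a ≤ 4*(n:ℤ)+2 → vD a (a-4*(n:ℤ)-3) ∈ P) := by
    refine Int.le_induction ?_ ?_
    · intro _
      apply forced_up hP
      · exact memK3 _ (Or.inl ⟨by omega, by omega, by omega⟩)
      · exact notK3 n _ (by push_cast; omega)
      · exact notK3 n _ (by push_cast; omega)
      · exact Or.inl (notK3 n _ (by push_cast; omega))
    · intro a ha ih ha2
      apply forced_up hP
      · exact memK3 _ (Or.inl ⟨by omega, by omega, by omega⟩)
      · exact notK3 n _ (by push_cast; omega)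
      · exact notK3 n _ (by push_cast; omega)
      · refine Or.inr ⟨vD a (a-4*(n:ℤ)-3), ih (by omega), ?_, ?_⟩
        · rw [mem_vD]; constructor
          · omega
          · omega
        · intro hmem
          rw [mem_vD] at hmem
          omega
  -- top chain
  have top : ∀ a : ℤ, 2*(n:ℤ)+1 ≤ a → (a ≤ 4*(n:ℤ)+1 → vD a (4*(n:ℤ)+1-a) ∈ P) := by
    refine Int.le_induction ?_ ?_
    · intro _
      apply forced_down hP
      · exact memK3 _ (Or.inr ⟨by omega, by omega, by omega⟩)
      · exact notK3 n _ (by push_cast; omega)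
      · exact notK3 n _ (by push_cast; omega)
      · exact Or.inl (notK3 n _ (by push_cast; omega))
    · intro a ha ih ha2
      apply forced_down hP
      · exact memK3 _ (Or.inr ⟨by omega, by omega, by omega⟩)
      · exact notK3 n _ (by push_cast; omega)
      · exact notK3 n _ (by push_cast; omega)
      · refine Or.inr ⟨vD a (4*(n:ℤ)+1-a), ih (by omega), ?_, ?_⟩
        · rw [mem_vD]; constructor
          · omega
          · omega
        · intro hmem
          rw [mem_vD] at hmem
          omega
  rintro d ⟨a, ⟨h1, h2, rfl⟩ | ⟨h1, h2, rfl⟩⟩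
  · exact bot a h1 h2
  · exact top a h1 h2

lemma tiling_add {n : ℕ} {Q : Set (Finset (ℤ × ℤ))} (hQ : IsTiling (Kna (4*n+1)) Q) :
    IsTiling (Kna (4*n+3)) (Q ∪ Frame n) := by
  refine ⟨?_, ?_, ?_⟩
  · rintro d (hd | ⟨a, ⟨_, _, rfl⟩ | ⟨_, _, rfl⟩⟩)
    · exact hQ.1 d hd
    · exact vD_domino _ _
    · exact vD_domino _ _
  · rintro d (hd | hd) d' (hd' | hd') hne
    · exact hQ.2.1 hd hd' hne
    · refine Finset.disjoint_left.mpr fun x hx hx' => ?_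
      exact FC_not_K1 (frame_cell_FC hd' hx') (tile_sub hQ hd hx)
    · refine Finset.disjoint_left.mpr fun x hx hx' => ?_
      exact FC_not_K1 (frame_cell_FC hd hx) (tile_sub hQ hd' hx')
    · exact Finset.disjoint_left.mpr fun x hx hx' => hne (frame_eq_of_mem hd hd' hx hx')
  · ext c
    simp only [Set.mem_iUnion, Set.mem_union, exists_prop]
    constructor
    · rintro ⟨d, hd | hd, hcd⟩
      · exact (K3_iff n c).mpr (Or.inl (tile_sub hQ hd hcd))
      · exact (K3_iff n c).mpr (Or.inr (frame_cell_FC hd hcd))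
    · intro hc
      rcases (K3_iff n c).mp hc with hc1 | hc2
      · obtain ⟨d, hd, hcd⟩ := tile_cover hQ hc1
        exact ⟨d, Or.inl hd, hcd⟩
      · obtain ⟨d, hd, hcd⟩ := FC_cover hc2
        exact ⟨d, Or.inr hd, hcd⟩

lemma tiling_sub' {n : ℕ} {P : Set (Finset (ℤ × ℤ))} (hP : IsTiling (Kna (4*n+3)) P) :
    IsTiling (Kna (4*n+1)) (P \ Frame n) := by
  refine ⟨fun d hd => hP.1 d hd.1, hP.2.1.subset Set.diff_subset, ?_⟩
  ext c
  simp only [Set.mem_iUnion, Set.mem_diff, exists_prop]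
  constructor
  · rintro ⟨d, ⟨hdP, hdF⟩, hcd⟩
    have hc3 : c ∈ Kna (4*n+3) := tile_sub hP hdP hcd
    rcases (K3_iff n c).mp hc3 with h | h
    · exact h
    · exfalso
      obtain ⟨f, hfF, hcf⟩ := FC_cover h
      have hfP : f ∈ P := frame_sub hP hfF
      have hne : d ≠ f := fun he => hdF (he ▸ hfF)
      exact (Finset.disjoint_left.mp (hP.2.1 hdP hfP hne) hcd) hcf
  · intro hc1
    have hc3 : c ∈ Kna (4*n+3) := (K3_iff n c).mpr (Or.inl hc1)
    obtain ⟨d, hdP, hcd⟩ := tile_cover hP hc3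
    refine ⟨d, ⟨hdP, fun hdF => ?_⟩, hcd⟩
    exact FC_not_K1 (frame_cell_FC hdF hcd) hc1

lemma disj_frame {n : ℕ} {Q : Set (Finset (ℤ × ℤ))} (hQ : IsTiling (Kna (4*n+1)) Q) :
    Q ∩ Frame n = ∅ := by
  ext d
  simp only [Set.mem_inter_iff, Set.mem_empty_iff_false, iff_false, not_and]
  intro hdQ hdF
  obtain ⟨a, ⟨h1, h2, rfl⟩ | ⟨h1, h2, rfl⟩⟩ := hdF
  · have hx : ((a, a-4*(n:ℤ)-3) : ℤ × ℤ) ∈ vD a (a-4*(n:ℤ)-3) := mem_vD.mpr ⟨rfl, Or.inl rfl⟩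
    exact FC_not_K1 (frame_cell_FC ⟨a, Or.inl ⟨h1, h2, rfl⟩⟩ hx) (tile_sub hQ hdQ hx)
  · have hx : ((a, 4*(n:ℤ)+1-a) : ℤ × ℤ) ∈ vD a (4*(n:ℤ)+1-a) := mem_vD.mpr ⟨rfl, Or.inl rfl⟩
    exact FC_not_K1 (frame_cell_FC ⟨a, Or.inr ⟨h1, h2, rfl⟩⟩ hx) (tile_sub hQ hdQ hx)


/-- `T(K_na(4n+1)) = T(K_na(4n+3))`. -/
theorem nonabutting_forced_odd (n : ℕ) (hn : 1 ≤ n) :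
    numTilings (Kna (4 * n + 1)) = numTilings (Kna (4 * n + 3)) := by
  have himg : {P : Set (Finset (ℤ × ℤ)) | IsTiling (Kna (4*n+3)) P} =
      (fun Q => Q ∪ Frame n) '' {Q | IsTiling (Kna (4*n+1)) Q} := by
    ext P
    simp only [Set.mem_setOf_eq, Set.mem_image]
    constructor
    · intro hP
      refine ⟨P \ Frame n, tiling_sub' hP, ?_⟩
      have := frame_sub hP
      ext d
      simp only [Set.mem_union, Set.mem_diff]
      constructor
      · rintro (⟨hd, _⟩ | hd)
        · exact hd
        · exact this hd
      · intro hd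
        by_cases hdF : d ∈ Frame n
        · exact Or.inr hdF
        · exact Or.inl ⟨hd, hdF⟩
    · rintro ⟨Q, hQ, rfl⟩
      exact tiling_add hQ
  have hinj : Set.InjOn (fun Q => Q ∪ Frame n) {Q | IsTiling (Kna (4*n+1)) Q} := by
    intro Q hQ Q' hQ' he
    have h1 := disj_frame hQ
    have h2 := disj_frame hQ'
    have key : ∀ (S : Set (Finset (ℤ × ℤ))), S ∩ Frame n = ∅ → (S ∪ Frame n) \ Frame n = S := by
      intro S hS
      ext d
      simp only [Set.mem_diff, Set.mem_union]
      constructor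
      · rintro ⟨hd | hd, hdF⟩
        · exact hd
        · exact absurd hd hdF
      · intro hd
        refine ⟨Or.inl hd, fun hdF => ?_⟩
        have : d ∈ S ∩ Frame n := ⟨hd, hdF⟩
        rw [hS] at this
        exact this
    calc Q = (Q ∪ Frame n) \ Frame n := (key Q h1).symm
      _ = (Q' ∪ Frame n) \ Frame n := by rw [show Q ∪ Frame n = Q' ∪ Frame n from he]
      _ = Q' := key Q' h2
  rw [numTilings, numTilings, himg, Set.ncard_image_of_injOn hinj]
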